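/- arXiv:1906.04519 — 4 statements merged into one kernel-verified Lean document; each statement's English description precedes it below -/
import Mathlib

section
/- In a Kähler–Poisson algebra, with D^{ij} = η{xⁱ,xˡ}g_{lk}{xʲ,xᵏ} and Pⁱ(a) = {xⁱ,a}, the following identities hold for all a ∈ A: (i) D^{ij} g_{jk} Pᵏ(a) = Pⁱ(a); (ii) P^{ij} g_{jk} Dᵏ(a) = Pⁱ(a) where Dⁱ(a) = η{xᵏ,a}g_{kl}{xˡ,xⁱ}; (iii) D^{i}_{\ j} D^{jk} = D^{ik} where D^{i}_{\ j} = D^{il} g_{lj}. -/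
structure IsPoissonBracket {A : Type*} [CommRing A] (br : A → A → A) : Prop where
  add_left : ∀ a b c, br (a + b) c = br a c + br b c
  add_right : ∀ a b c, br a (b + c) = br a b + br a c
  antisymm : ∀ a b, br a b = - br b a
  leibniz : ∀ a b c, br a (b * c) = br a b * c + b * br a c
  jacobi : ∀ a b c, br a (br b c) + br b (br c a) + br c (br a b) = 0

private lemma sum4_comm' {β : Type*} [AddCommMonoid β] {m : ℕ}
    (f : Fin m → Fin m → Fin m → Fin m → β) :
    ∑ j, ∑ k, ∑ l, ∑ p, f j k l p = ∑ l, ∑ p, ∑ j, ∑ k, f j k l p := by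
  calc ∑ j, ∑ k, ∑ l, ∑ p, f j k l p
      = ∑ j, ∑ l, ∑ k, ∑ p, f j k l p :=
        Finset.sum_congr rfl fun j _ => Finset.sum_comm
    _ = ∑ j, ∑ l, ∑ p, ∑ k, f j k l p :=
        Finset.sum_congr rfl fun j _ => Finset.sum_congr rfl fun l _ => Finset.sum_comm
    _ = ∑ l, ∑ j, ∑ p, ∑ k, f j k l p := Finset.sum_comm
    _ = ∑ l, ∑ p, ∑ j, ∑ k, f j k l p :=
        Finset.sum_congr rfl fun l _ => Finset.sum_comm

/-- the identities `D^{ij}g_{jk}P^k(a) = P^i(a)`,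
`P^{ij}g_{jk}D^k(a) = P^i(a)` and `D^i_j D^{jk} = D^{ik}` in a
Kähler–Poisson algebra. -/
theorem kahler_poisson_D_identities
    {A : Type*} [CommRing A] (br : A → A → A) (hbr : IsPoissonBracket br)
    {m : ℕ} (x : Fin m → A) (g : Matrix (Fin m) (Fin m) A) (hg : g.IsSymm) (η : A)
    (hKP : ∀ a b : A,
      (∑ i, ∑ j, ∑ k, ∑ l,
          η * br a (x i) * g i j * br (x j) (x k) * g k l * br (x l) b) = - br a b)
    (D : Fin m → Fin m → A)
    (hD : ∀ i j, D i j = ∑ l, ∑ k, η * br (x i) (x l) * g l k * br (x j) (x k))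
    (Dop : Fin m → A → A)
    (hDop : ∀ i a, Dop i a = ∑ k, ∑ l, η * br (x k) a * g k l * br (x l) (x i)) :
    (∀ (i : Fin m) (a : A), (∑ j, ∑ k, D i j * g j k * br (x k) a) = br (x i) a) ∧
    (∀ (i : Fin m) (a : A), (∑ j, ∑ k, br (x i) (x j) * g j k * Dop k a) = br (x i) a) ∧
    (∀ i k : Fin m, (∑ j, (∑ l, D i l * g l j) * D j k) = D i k) := by
  have part1 : ∀ (i : Fin m) (a : A),
      (∑ j, ∑ k, D i j * g j k * br (x k) a) = br (x i) a := by
    intro i a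
    have h := hKP (x i) a
    have e1 : (∑ j, ∑ k, D i j * g j k * br (x k) a)
        = ∑ j, ∑ k, ∑ l, ∑ p,
            -(η * br (x i) (x l) * g l p * br (x p) (x j) * g j k * br (x k) a) := by
      refine Finset.sum_congr rfl fun j _ => Finset.sum_congr rfl fun k _ => ?_
      rw [hD, Finset.sum_mul, Finset.sum_mul]
      refine Finset.sum_congr rfl fun l _ => ?_
      rw [Finset.sum_mul, Finset.sum_mul]
      refine Finset.sum_congr rfl fun p _ => ?_
      rw [hbr.antisymm (x j) (x p)]
      ring
    rw [e1, sum4_comm' (fun j k l p =>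
      -(η * br (x i) (x l) * g l p * br (x p) (x j) * g j k * br (x k) a))]
    simp only [Finset.sum_neg_distrib]
    rw [h, neg_neg]
  refine ⟨part1, ?_, ?_⟩
  · intro i a
    have h := hKP a (x i)
    have e1 : (∑ j, ∑ k, br (x i) (x j) * g j k * Dop k a)
        = ∑ j, ∑ k, ∑ p, ∑ q,
            η * br a (x p) * g p q * br (x q) (x k) * g k j * br (x j) (x i) := by
      refine Finset.sum_congr rfl fun j _ => Finset.sum_congr rfl fun k _ => ?_
      rw [hDop, Finset.mul_sum]
      refine Finset.sum_congr rfl fun p _ => ?_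
      rw [Finset.mul_sum]
      refine Finset.sum_congr rfl fun q _ => ?_
      rw [hbr.antisymm (x p) a, hbr.antisymm (x i) (x j), hg.apply j k]
      ring
    rw [e1, sum4_comm' (fun j k p q =>
      η * br a (x p) * g p q * br (x q) (x k) * g k j * br (x j) (x i))]
    have e2 : (∑ p, ∑ q, ∑ j, ∑ k,
          η * br a (x p) * g p q * br (x q) (x k) * g k j * br (x j) (x i))
        = ∑ p, ∑ q, ∑ k, ∑ j,
          η * br a (x p) * g p q * br (x q) (x k) * g k j * br (x j) (x i) :=
      Finset.sum_congr rfl fun p _ => Finset.sum_congr rfl fun q _ => Finset.sum_comm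
    rw [e2, h, hbr.antisymm a (x i), neg_neg]
  · intro i k
    have key : ∀ p : Fin m,
        (∑ j, (∑ l, D i l * g l j) * br (x j) (x p)) = br (x i) (x p) := by
      intro p
      calc ∑ j, (∑ l, D i l * g l j) * br (x j) (x p)
          = ∑ j, ∑ l, D i l * g l j * br (x j) (x p) := by
            refine Finset.sum_congr rfl fun j _ => ?_
            rw [Finset.sum_mul]
        _ = ∑ l, ∑ j, D i l * g l j * br (x j) (x p) := Finset.sum_comm
        _ = br (x i) (x p) := part1 i (x p)
    calc ∑ j, (∑ l, D i l * g l j) * D j k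
        = ∑ j, ∑ p, ∑ q,
            (∑ l, D i l * g l j) * (η * br (x j) (x p) * g p q * br (x k) (x q)) := by
          refine Finset.sum_congr rfl fun j _ => ?_
          rw [hD, Finset.mul_sum]
          refine Finset.sum_congr rfl fun p _ => ?_
          rw [Finset.mul_sum]
      _ = ∑ p, ∑ q, ∑ j,
            (∑ l, D i l * g l j) * (η * br (x j) (x p) * g p q * br (x k) (x q)) := by
          rw [Finset.sum_comm]
          exact Finset.sum_congr rfl fun p _ => Finset.sum_comm
      _ = ∑ p, ∑ q,
            η * (∑ j, (∑ l, D i l * g l j) * br (x j) (x p)) * g p q * br (x k) (x q) := by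
          refine Finset.sum_congr rfl fun p _ => Finset.sum_congr rfl fun q _ => ?_
          rw [Finset.mul_sum, Finset.sum_mul, Finset.sum_mul]
          exact Finset.sum_congr rfl fun j _ => by ring
      _ = ∑ p, ∑ q, η * br (x i) (x p) * g p q * br (x k) (x q) := by
          refine Finset.sum_congr rfl fun p _ => Finset.sum_congr rfl fun q _ => ?_
          rw [key p]
      _ = D i k := (hD i k).symm
end

section
/- Let (φ,ψ): K → K′ be an isomorphism of Kähler–Poisson algebras with φ(P) = A P′ Aᵀ and P′ g′ P′ = P′ Aᵀ φ(g) A P′ (matrix identities over A′), where η P g P g P = -P and η′ P′ g′ P′ g′ P′ = -P′. Then (φ(η) - η′)·P′ = 0, i.e. φ(η) - η′ annihilates every entry {y^α, y^β}′ of P′. -/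
/-!
Apply `φ` to `η P g P g P = -P`. The compatibility condition lets the two inner factors
`φ(g)` be traded for `g'`, so that `φ(P) φ(g) φ(P) φ(g) φ(P) = A (P' g' P' g' P') Aᵀ`; hence
both `φ(η)` and `η'` send `X = A (P' g' P' g' P') Aᵀ` to `-φ(P)`, and `φ(η) - η'` kills `φ(P)`.
Expanding the brackets `{y^α, y^β}′` through the inverse Jacobian `B` gives `P' = B φ(P) Bᵀ`,
so `φ(η) - η'` kills `P'` as well.
-/

theorem sub_smul_eq_zero_of_smul_eq_neg {R M : Type*} [CommRing R] [AddCommGroup M] [Module R M]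
    {c c' : R} {x p : M} (hc : c • x = -p) (hc' : c' • x = -p) : (c - c') • p = 0 := by
  have hp : p = -(c' • x) := by rw [hc', neg_neg]
  calc (c - c') • p = -(c' • (c • x - c' • x)) := by rw [hp, smul_neg, smul_comm, sub_smul]
    _ = 0 := by rw [hc, hc', sub_self, smul_zero, neg_zero]

namespace Matrix

variable {R : Type*} {m n : Type*}

def bracketMatrix (br : R → R → R) (z : n → R) : Matrix n n R :=
  of fun i j => br (z i) (z j)

theorem bracketMatrix_map {S : Type*} {br : R → R → R} {br' : S → S → S}
    (φ : R → S) (hφ : ∀ a b, φ (br a b) = br' (φ a) (φ b)) (z : n → R) :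
    (bracketMatrix br z).map φ = bracketMatrix br' fun i => φ (z i) :=
  ext fun i j => hφ (z i) (z j)

theorem bracketMatrix_eq_mul_mul_transpose [CommRing R] [Fintype n] {br : R → R → R}
    (hanti : ∀ a b, br a b = -br b a) {y : m → R} {z : n → R} (B : Matrix m n R)
    (hB : ∀ a c, br (y a) c = ∑ i, B a i * br (z i) c) :
    bracketMatrix br y = B * bracketMatrix br z * Bᵀ := by
  have hB_right : ∀ c b, br c (y b) = ∑ j, B b j * br c (z j) := fun c b => by
    rw [hanti, hB, ← Finset.sum_neg_distrib]
    exact Finset.sum_congr rfl fun j _ => by rw [hanti (z j)]; ring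
  ext a b
  simp only [bracketMatrix, of_apply, mul_apply, transpose_apply, hB a, hB_right, Finset.mul_sum,
    Finset.sum_mul]
  exact Finset.sum_congr rfl fun i _ => Finset.sum_congr rfl fun j _ => by ring

theorem conj_mul_conj_mul_conj_of_compat [Semiring R] [Fintype m] [Fintype n]
    (T : Matrix n m R) (Q : Matrix m m R) (g : Matrix n n R) (g' : Matrix m m R)
    (hcompat : Q * g' * Q = Q * Tᵀ * g * T * Q) :
    (T * Q * Tᵀ) * g * (T * Q * Tᵀ) * g * (T * Q * Tᵀ) = T * (Q * g' * Q * g' * Q) * Tᵀ := by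
  have hcompat_mul : ∀ M : Matrix m n R, Q * (Tᵀ * (g * (T * (Q * M)))) = Q * (g' * (Q * M)) :=
    fun M => by simpa only [Matrix.mul_assoc] using (congrArg (· * M) hcompat).symm
  simp only [Matrix.mul_assoc, hcompat_mul]

end Matrix

open Matrix in
theorem kp_iso_eta_matrix_general
    {A A' : Type*} [CommRing A] [CommRing A']
    (br : A → A → A) (br' : A' → A' → A')
    (hbr' : IsPoissonBracket br')
    {m m' : ℕ} (x : Fin m → A) (y : Fin m' → A')
    (g : Matrix (Fin m) (Fin m) A) (g' : Matrix (Fin m') (Fin m') A')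
    (η : A) (η' : A')
    (P : Matrix (Fin m) (Fin m) A) (P' : Matrix (Fin m') (Fin m') A')
    (hP : ∀ i j, P i j = br (x i) (x j)) (hP' : ∀ a b, P' a b = br' (y a) (y b))
    (hK : η • (P * g * P * g * P) = -P)
    (hK' : η' • (P' * g' * P' * g' * P') = -P')
    (φ : A ≃+* A') (hφ : ∀ a b, φ (br a b) = br' (φ a) (φ b))
    (Amat : Matrix (Fin m) (Fin m') A')
    (hPA : P.map φ = Amat * P' * Amat.transpose)
    (hcompat : P' * g' * P' = P' * Amat.transpose * (g.map φ) * Amat * P')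
    (Bmat : Matrix (Fin m') (Fin m) A')
    (hB : ∀ (a : Fin m') (c : A'), br' (y a) c = ∑ i, Bmat a i * br' (φ (x i)) c) :
    (φ η - η') • P' = 0 := by
  have hφK : φ η • (Amat * (P' * g' * P' * g' * P') * Amatᵀ) = -P.map φ := by
    have hK_map := congrArg (·.map φ) hK
    simp only [map_smul' _ _ _ (map_mul φ), Matrix.map_neg _ (map_neg φ), Matrix.map_mul] at hK_map
    rwa [hPA, conj_mul_conj_mul_conj_of_compat _ _ _ _ hcompat, ← hPA] at hK_map
  have hK'_conj : η' • (Amat * (P' * g' * P' * g' * P') * Amatᵀ) = -P.map φ := by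
    rw [← Matrix.smul_mul, ← Matrix.mul_smul, hK', Matrix.mul_neg, Matrix.neg_mul, hPA]
  have hPB : P' = Bmat * P.map φ * Bmatᵀ := by
    have hP_eq : P = bracketMatrix br x := ext hP
    rw [hP_eq, bracketMatrix_map _ hφ, ← bracketMatrix_eq_mul_mul_transpose hbr'.antisymm _ hB]
    exact ext hP'
  rw [hPB, ← Matrix.smul_mul, ← Matrix.mul_smul, sub_smul_eq_zero_of_smul_eq_neg hφK hK'_conj,
    Matrix.mul_zero, Matrix.zero_mul]

/-- for an isomorphism `(φ, ψ)` of Kähler–Poisson algebras, with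
`φ(P) = A P' Aᵀ` and `P' g' P' = P' Aᵀ φ(g) A P'`, where `η P g P g P = -P` and
`η' P' g' P' g' P' = -P'`, one has `(φ(η) - η') • P' = 0`. The matrix
`A^i_α = ∂φ(xⁱ)/∂y^α` is encoded through the Leibniz-expansion hypotheses `hA`
(for `φ`) and `hB` (for `φ⁻¹`, using `φ(A_fin) = A'_fin`). -/
theorem kp_iso_eta_matrix
    {A A' : Type*} [CommRing A] [CommRing A']
    (br : A → A → A) (br' : A' → A' → A')
    (hbr : IsPoissonBracket br) (hbr' : IsPoissonBracket br')
    {m m' : ℕ} (x : Fin m → A) (y : Fin m' → A')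
    (g : Matrix (Fin m) (Fin m) A) (g' : Matrix (Fin m') (Fin m') A')
    (hg : g.IsSymm) (hg' : g'.IsSymm)
    (η : A) (η' : A')
    (P : Matrix (Fin m) (Fin m) A) (P' : Matrix (Fin m') (Fin m') A')
    (hP : ∀ i j, P i j = br (x i) (x j)) (hP' : ∀ a b, P' a b = br' (y a) (y b))
    (hK : η • (P * g * P * g * P) = -P)
    (hK' : η' • (P' * g' * P' * g' * P') = -P')
    (φ : A ≃+* A') (hφ : ∀ a b, φ (br a b) = br' (φ a) (φ b))
    (Amat : Matrix (Fin m) (Fin m') A')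
    (hA : ∀ (i : Fin m) (c : A'), br' (φ (x i)) c = ∑ α, Amat i α * br' (y α) c)
    (hPA : P.map φ = Amat * P' * Amat.transpose)
    (hcompat : P' * g' * P' = P' * Amat.transpose * (g.map φ) * Amat * P')
    (Bmat : Matrix (Fin m') (Fin m) A')
    (hB : ∀ (a : Fin m') (c : A'), br' (y a) c = ∑ i, Bmat a i * br' (φ (x i)) c) :
    (φ η - η') • P' = 0 :=
  kp_iso_eta_matrix_general br br' hbr' x y g g' η η' P P' hP hP' hK hK' φ hφ Amat hPA hcompat Bmat
    hB
end

section
/- Direct sums of Kähler–Poisson algebras are Kähler–Poisson: if K = (A,g,{x¹,...,xᵐ}) with structure element η and K′ = (A′,g′,{y¹,...,y^{m′}}) with structure element η′ are Kähler–Poisson algebras, then K ⊕ K′ := (A ⊕ A′, ĝ, {z¹,...,z^{m+m′}}) is a Kähler–Poisson algebra with structure element (η,η′), where z^I = (x^I,0) for 1 ≤ I ≤ m, z^I = (0, y^{I-m}) for m < I ≤ m+m′, and ĝ is the block-diagonal matrix with ĝ_{IJ} = (g_{IJ},0) for I,J ≤ m, ĝ_{IJ} = (0, g′_{I-m,J-m})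 for I,J > m, and ĝ_{IJ} = (0,0) otherwise. -/
/-- The Kähler–Poisson condition for `(A, g, x)` with structure element `η`. -/
def IsKahlerPoissonWith {A : Type*} [CommRing A] (br : A → A → A) {m : ℕ}
    (g : Matrix (Fin m) (Fin m) A) (x : Fin m → A) (η : A) : Prop :=
  g.IsSymm ∧ ∀ a b : A,
    (∑ i, ∑ j, ∑ k, ∑ l,
        η * br a (x i) * g i j * br (x j) (x k) * g k l * br (x l) b) = - br a b

/-- the direct sum of two Kähler–Poisson algebras is a
Kähler–Poisson algebra, with generators `z^I = (x^I, 0), (0, y^{I-m})`,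
block-diagonal metric `ĝ`, and structure element `(η, η')`. -/
theorem direct_sum_kahler_poisson
    {A A' : Type*} [CommRing A] [CommRing A']
    (br : A → A → A) (br' : A' → A' → A')
    (hbr : IsPoissonBracket br) (hbr' : IsPoissonBracket br')
    {m m' : ℕ} (g : Matrix (Fin m) (Fin m) A) (g' : Matrix (Fin m') (Fin m') A')
    (x : Fin m → A) (y : Fin m' → A') (η : A) (η' : A')
    (hK : IsKahlerPoissonWith br g x η) (hK' : IsKahlerPoissonWith br' g' y η')
    (z : Fin (m + m') → A × A')
    (hz1 : ∀ i : Fin m, z (Fin.castAdd m' i) = (x i, 0))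
    (hz2 : ∀ j : Fin m', z (Fin.natAdd m j) = (0, y j))
    (ghat : Matrix (Fin (m + m')) (Fin (m + m')) (A × A'))
    (hg1 : ∀ i j : Fin m, ghat (Fin.castAdd m' i) (Fin.castAdd m' j) = (g i j, 0))
    (hg2 : ∀ i j : Fin m', ghat (Fin.natAdd m i) (Fin.natAdd m j) = (0, g' i j))
    (hg3 : ∀ (i : Fin m) (j : Fin m'), ghat (Fin.castAdd m' i) (Fin.natAdd m j) = 0)
    (hg4 : ∀ (i : Fin m') (j : Fin m), ghat (Fin.natAdd m i) (Fin.castAdd m' j) = 0) :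
    IsKahlerPoissonWith (A := A × A') (fun p q => (br p.1 q.1, br' p.2 q.2))
      ghat z (η, η') := by
  constructor
  · refine Matrix.IsSymm.ext fun i j => ?_
    induction i using Fin.addCases with
    | left i =>
      induction j using Fin.addCases with
      | left j => rw [hg1, hg1, hK.1.apply]
      | right j => rw [hg3, hg4]
    | right i =>
      induction j using Fin.addCases with
      | left j => rw [hg4, hg3]
      | right j => rw [hg2, hg2, hK'.1.apply]
  · intro a b
    have h1 := hK.2 a.1 b.1
    have h2 := hK'.2 a.2 b.2
    ext
    · simp only [Prod.fst_sum, Fin.sum_univ_add, hz1, hz2, hg1, hg2, hg3, hg4,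
        Prod.mk_mul_mk, Prod.fst_mul, Prod.snd_mul, Prod.fst_zero, Prod.snd_zero,
        mul_zero, zero_mul, Finset.sum_const_zero, add_zero, zero_add]
      simpa [Prod.fst_sum, Prod.snd_sum] using h1
    · simp only [Prod.snd_sum, Fin.sum_univ_add, hz1, hz2, hg1, hg2, hg3, hg4,
        Prod.mk_mul_mk, Prod.fst_mul, Prod.snd_mul, Prod.fst_zero, Prod.snd_zero,
        mul_zero, zero_mul, Finset.sum_const_zero, add_zero, zero_add]
      simpa [Prod.fst_sum, Prod.snd_sum] using h2
end

section
/- Tensor products of Kähler–Poisson algebras are Kähler–Poisson, assuming square roots of η exist: if K = (A,g,{x¹,...,xᵐ}) and K′ = (A′,g′,{y¹,...,y^{m′}}) are Kähler–Poisson algebras with structure elements η = ρ² and η′ = ρ′² for some ρ ∈ A, ρ′ ∈ A′, then K ⊗ K′ := (A ⊗ A′, g̃, {z¹,...,z^{m+m′}}) satisfies the Kähler–Poisson condition with structure element 1 (i.e. Σ_{I,J,K,L} {a₁⊗a₂, z^I} g̃_{IJ} {z^J,z^K} g̃_{KL} {z^L, b₁⊗b₂} = -{a₁⊗a₂, b₁⊗b₂}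 for all a₁,b₁ ∈ A, a₂,b₂ ∈ A′), where z^I = x^I ⊗ 1 for I ≤ m, z^I = 1 ⊗ y^{I-m} for I > m, and g̃ is block diagonal with g̃_{IJ} = ρg_{IJ} ⊗ 1 for I,J ≤ m, g̃_{IJ} = 1 ⊗ ρ′g′_{I-m,J-m} for I,J > m, and 0 otherwise. -/
open scoped TensorProduct

/-- tensor products of Kähler–Poisson algebras are Kähler–Poisson
(with structure element `1`), assuming square roots `ρ, ρ'` of `η, η'` exist.
The bracket `B` on `A ⊗ A'` is the Poisson bracket of the tensor product, and
the condition is verified on pure tensors. -/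
theorem tensor_product_kahler_poisson
    {k A A' : Type*} [CommRing k] [CommRing A] [CommRing A']
    [Algebra k A] [Algebra k A']
    (br : A → A → A) (br' : A' → A' → A')
    (hbr : IsPoissonBracket br) (hbr' : IsPoissonBracket br')
    {m m' : ℕ} (g : Matrix (Fin m) (Fin m) A) (g' : Matrix (Fin m') (Fin m') A')
    (x : Fin m → A) (y : Fin m' → A') (η ρ : A) (η' ρ' : A')
    (hρ : ρ ^ 2 = η) (hρ' : ρ' ^ 2 = η')
    (hK : IsKahlerPoissonWith br g x η) (hK' : IsKahlerPoissonWith br' g' y η')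
    (B : A ⊗[k] A' → A ⊗[k] A' → A ⊗[k] A')
    (hB : ∀ (a₁ b₁ : A) (a₂ b₂ : A'),
      B (a₁ ⊗ₜ[k] a₂) (b₁ ⊗ₜ[k] b₂) =
        br a₁ b₁ ⊗ₜ[k] (a₂ * b₂) + (a₁ * b₁) ⊗ₜ[k] br' a₂ b₂)
    (z : Fin (m + m') → A ⊗[k] A')
    (hz1 : ∀ i : Fin m, z (Fin.castAdd m' i) = x i ⊗ₜ[k] 1)
    (hz2 : ∀ j : Fin m', z (Fin.natAdd m j) = 1 ⊗ₜ[k] y j)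
    (gt : Fin (m + m') → Fin (m + m') → A ⊗[k] A')
    (hgt1 : ∀ i j : Fin m, gt (Fin.castAdd m' i) (Fin.castAdd m' j) = (ρ * g i j) ⊗ₜ[k] 1)
    (hgt2 : ∀ i j : Fin m', gt (Fin.natAdd m i) (Fin.natAdd m j) = 1 ⊗ₜ[k] (ρ' * g' i j))
    (hgt3 : ∀ (i : Fin m) (j : Fin m'), gt (Fin.castAdd m' i) (Fin.natAdd m j) = 0)
    (hgt4 : ∀ (i : Fin m') (j : Fin m), gt (Fin.natAdd m i) (Fin.castAdd m' j) = 0) :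
    ∀ (a₁ b₁ : A) (a₂ b₂ : A'),
      (∑ I, ∑ J, ∑ K, ∑ L,
          B (a₁ ⊗ₜ[k] a₂) (z I) * gt I J * B (z J) (z K) * gt K L *
            B (z L) (b₁ ⊗ₜ[k] b₂))
        = - B (a₁ ⊗ₜ[k] a₂) (b₁ ⊗ₜ[k] b₂) := by
  intro a₁ b₁ a₂ b₂
  have hbr1 : ∀ a : A, br a 1 = 0 := by
    intro a
    have h := hbr.leibniz a 1 1
    rw [mul_one, mul_one, one_mul] at h
    linear_combination -h
  have hbr1' : ∀ a : A', br' a 1 = 0 := by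
    intro a
    have h := hbr'.leibniz a 1 1
    rw [mul_one, mul_one, one_mul] at h
    linear_combination -h
  have hbrl : ∀ a : A, br 1 a = 0 := by
    intro a; rw [hbr.antisymm, hbr1, neg_zero]
  have hbrl' : ∀ a : A', br' 1 a = 0 := by
    intro a; rw [hbr'.antisymm, hbr1', neg_zero]
  simp only [Fin.sum_univ_add, hz1, hz2, hgt1, hgt2, hgt3, hgt4, hB, hbr1, hbr1',
    hbrl, hbrl', TensorProduct.zero_tmul, TensorProduct.tmul_zero, add_zero, zero_add,
    mul_zero, zero_mul, mul_one, one_mul, Finset.sum_const_zero,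
    Finset.sum_add_distrib, Algebra.TensorProduct.tmul_mul_tmul]
  have key1 : (∑ i, ∑ j, ∑ k, ∑ l,
      (br a₁ (x i) * (ρ * g i j) * br (x j) (x k) * (ρ * g k l) * br (x l) b₁)) = - br a₁ b₁ := by
    have hpt : ∀ i j k l, br a₁ (x i) * (ρ * g i j) * br (x j) (x k) * (ρ * g k l) * br (x l) b₁
        = η * br a₁ (x i) * g i j * br (x j) (x k) * g k l * br (x l) b₁ := by
      intro i j k l; rw [← hρ]; ring
    simp_rw [hpt]
    exact hK.2 a₁ b₁
  have key2 : (∑ i, ∑ j, ∑ k, ∑ l,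
      (br' a₂ (y i) * (ρ' * g' i j) * br' (y j) (y k) * (ρ' * g' k l) * br' (y l) b₂)) = - br' a₂ b₂ := by
    have hpt : ∀ i j k l, br' a₂ (y i) * (ρ' * g' i j) * br' (y j) (y k) * (ρ' * g' k l) * br' (y l) b₂
        = η' * br' a₂ (y i) * g' i j * br' (y j) (y k) * g' k l * br' (y l) b₂ := by
      intro i j k l; rw [← hρ']; ring
    simp_rw [hpt]
    exact hK'.2 a₂ b₂
  simp only [← TensorProduct.sum_tmul, ← TensorProduct.tmul_sum, key1, key2,
    TensorProduct.neg_tmul, TensorProduct.tmul_neg, neg_add]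
end
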